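/- arXiv:1410.7829 — 4 statements merged into one kernel-verified Lean document; each statement's English description precedes it below -/
import Mathlib

section
/- Let r ∈ ℕ and k ∈ (0, r) be non-integer. Then ∫_0^r N_r(u) / u^{r-k} du = κ(k,r) / Γ(r-k), where κ(k,r) = Γ(-k) · ∑_{m=0}^{r} (-1)^m C(r,m) m^k and N_r is the r-th B-spline. -/
/-!
Since `N_{r+1}(u) = ∫_0^1 N_r(u - t) dt`, Fubini and a translation give
`∫ N_{r+1}(u) f(u) du = ∫_0^1 ∫ N_r(v) f(v + t) dv dt`. Inductively, `∫ N_r(u) (u + a)^s du` is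
the `r`-th forward difference at `a` of the `r`-fold primitive `x^(s+r) / ((s+1)⋯(s+r))` of `x^s`.
The inner integrals are taken at `a + t > 0`, so only the outermost one meets the singularity
of `x^s` at `0`, where `N_r(u) ≤ u^(r-1)` keeps it integrable. For `a = 0`, `s = k - r` the
difference is `∑ (-1)^(r-m) C(r,m) m^k / (k(k-1)⋯(k-r+1))`, and `Γ(r-k) = Γ(-k) (-k)(1-k)⋯(r-1-k)`
turns it into `κ(k,r) / Γ(r-k)`.
-/

open MeasureTheory Set

/-- The B-splines: `N_1 = χ_{(0,1)}`, `N_r(x) = ∫_0^1 N_{r-1}(x - t) dt` for `r ≥ 2`. -/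
noncomputable def Nspline : ℕ → ℝ → ℝ
  | 0, _ => 0
  | 1, x => if 0 < x ∧ x < 1 then 1 else 0
  | (r+2), x => ∫ t in (0:ℝ)..1, Nspline (r+1) (x - t)

/-- `κ(k,r) = Γ(-k) ∑_{m=0}^{r} (-1)^m C(r,m) m^k`. -/
noncomputable def kappa (k : ℝ) (r : ℕ) : ℝ :=
  Real.Gamma (-k) * ∑ m ∈ Finset.range (r+1), (-1:ℝ)^m * (r.choose m : ℝ) * (m:ℝ)^k

lemma nspline_succ_succ (r : ℕ) (x : ℝ) :
    Nspline (r + 2) x = ∫ t in (0:ℝ)..1, Nspline (r + 1) (x - t) := rfl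

lemma nspline_eq_zero_of_notMem : ∀ {r : ℕ} {x : ℝ}, x ∉ Ioo 0 (r : ℝ) → Nspline r x = 0
  | 0, _, _ => rfl
  | 1, x, hx => by simpa [Nspline] using hx
  | r + 2, x, hx => by
      rw [nspline_succ_succ]
      refine (intervalIntegral.integral_congr (g := fun _ => 0) fun t ht =>
        nspline_eq_zero_of_notMem ?_).trans intervalIntegral.integral_zero
      rw [uIcc_of_le zero_le_one] at ht
      simp only [mem_Ioo, not_and_or, not_lt] at hx ⊢
      push_cast at hx ⊢
      rcases hx with hx | hx
      · exact .inl (by linarith [ht.1])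
      · exact .inr (by linarith [ht.2])

lemma nspline_nonneg : ∀ (r : ℕ) (x : ℝ), 0 ≤ Nspline r x
  | 0, _ => le_rfl
  | 1, x => by unfold Nspline; split_ifs <;> norm_num
  | r + 2, x => intervalIntegral.integral_nonneg zero_le_one fun t _ => nspline_nonneg (r + 1) _

lemma nspline_le_one : ∀ (r : ℕ) (x : ℝ), Nspline r x ≤ 1
  | 0, _ => zero_le_one
  | 1, x => by unfold Nspline; split_ifs <;> norm_num
  | r + 2, x => by
      calc Nspline (r + 2) x ≤ ‖Nspline (r + 2) x‖ := Real.le_norm_self _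
        _ ≤ 1 * |1 - 0| := intervalIntegral.norm_integral_le_of_norm_le_const fun t _ => by
            rw [Real.norm_of_nonneg (nspline_nonneg _ _)]; exact nspline_le_one (r + 1) (x - t)
        _ = 1 := by norm_num

lemma norm_nspline_le_one (r : ℕ) (x : ℝ) : ‖Nspline r x‖ ≤ 1 := by
  rw [Real.norm_of_nonneg (nspline_nonneg r x)]; exact nspline_le_one r x

lemma measurable_nspline : ∀ r : ℕ, Measurable (Nspline r)
  | 0 => measurable_const
  | 1 => Measurable.ite measurableSet_Ioo measurable_const measurable_const
  | r + 2 => by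
      have hN : Nspline (r + 2) =
          fun x => ∫ t, Nspline (r + 1) (x - t) ∂volume.restrict (Ioc 0 1) :=
        funext fun x => intervalIntegral.integral_of_le zero_le_one
      rw [hN]
      exact ((measurable_nspline (r + 1)).comp (measurable_fst.sub measurable_snd))
        |>.stronglyMeasurable.integral_prod_right'.measurable

lemma integrable_nspline_comp {α : Type*} [MeasurableSpace α] {μ : Measure α} [IsFiniteMeasure μ]
    (r : ℕ) {f : α → ℝ} (hf : Measurable f) : Integrable (fun x => Nspline r (f x)) μ :=
  .of_bound ((measurable_nspline r).comp hf).aestronglyMeasurable 1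
    (.of_forall fun x => norm_nspline_le_one r (f x))

lemma intervalIntegrable_nspline (r : ℕ) (a b : ℝ) : IntervalIntegrable (Nspline r) volume a b :=
  ⟨integrable_nspline_comp r measurable_id, integrable_nspline_comp r measurable_id⟩

lemma nspline_succ_succ_eq_integral_of_le_one (r : ℕ) {x : ℝ} (hx : x ≤ 1) :
    Nspline (r + 2) x = ∫ s in (0:ℝ)..x, Nspline (r + 1) s := by
  rw [nspline_succ_succ, intervalIntegral.integral_comp_sub_left (Nspline (r + 1)) x, sub_zero,
    ← intervalIntegral.integral_add_adjacent_intervals (b := 0) (intervalIntegrable_nspline _ _ _)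
      (intervalIntegrable_nspline _ _ _), add_eq_right]
  refine (intervalIntegral.integral_congr (g := fun _ => 0) fun s hs =>
    nspline_eq_zero_of_notMem ?_).trans intervalIntegral.integral_zero
  rw [uIcc_of_le (by linarith)] at hs
  exact fun h => h.1.not_ge hs.2

lemma nspline_le_pow : ∀ (n : ℕ) {x : ℝ}, 0 ≤ x → Nspline (n + 1) x ≤ x ^ n
  | 0, x, _ => by simpa using nspline_le_one 1 x
  | n + 1, x, hx => by
    rcases le_or_gt 1 x with h1 | h1
    · exact (nspline_le_one _ x).trans (one_le_pow₀ h1)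
    calc Nspline (n + 2) x = ∫ s in (0:ℝ)..x, Nspline (n + 1) s :=
          nspline_succ_succ_eq_integral_of_le_one n h1.le
      _ ≤ ∫ s in (0:ℝ)..x, s ^ n :=
          intervalIntegral.integral_mono_on hx (intervalIntegrable_nspline _ _ _)
            ((continuous_pow n).intervalIntegrable _ _) fun s hs => nspline_le_pow n hs.1
      _ = x ^ (n + 1) / (n + 1) := by simp [integral_pow]
      _ ≤ x ^ (n + 1) := div_le_self (by positivity) (by linarith)

lemma integral_nspline_mul_eq_intervalIntegral (r : ℕ) (g : ℝ → ℝ) :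
    ∫ u, Nspline r u * g u = ∫ u in (0:ℝ)..r, Nspline r u * g u := by
  rw [intervalIntegral.integral_of_le (Nat.cast_nonneg r),
    setIntegral_eq_integral_of_forall_compl_eq_zero fun u hu => ?_]
  rw [nspline_eq_zero_of_notMem fun h => hu (Ioo_subset_Ioc_self h), zero_mul]

lemma integral_nspline_one_mul (g : ℝ → ℝ) :
    ∫ u, Nspline 1 u * g u = ∫ t in (0:ℝ)..1, g t := by
  have h (u : ℝ) : Nspline 1 u * g u = (Ioo 0 1).indicator g u := by
    by_cases hu : u ∈ Ioo (0:ℝ) 1 <;> simp_all [Nspline]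
  simp only [h, integral_indicator measurableSet_Ioo, ← integral_Ioc_eq_integral_Ioo,
    intervalIntegral.integral_of_le zero_le_one]

lemma integral_nspline_succ_succ_mul (r : ℕ) {g : ℝ → ℝ} (hg : Measurable g)
    (hint : Integrable fun u => Nspline (r + 2) u * g u) :
    ∫ u, Nspline (r + 2) u * g u = ∫ t in (0:ℝ)..1, ∫ v, Nspline (r + 1) v * g (v + t) := by
  have hN (u : ℝ) : Nspline (r + 2) u = ∫ t in Ioc (0:ℝ) 1, Nspline (r + 1) (u - t) :=
    intervalIntegral.integral_of_le zero_le_one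
  have hF : Integrable (Function.uncurry fun u t => Nspline (r + 1) (u - t) * g u)
      (volume.prod (volume.restrict (Ioc 0 1))) := by
    have hmeas : Measurable (Function.uncurry fun u t => Nspline (r + 1) (u - t) * g u) :=
      ((measurable_nspline _).comp (measurable_fst.sub measurable_snd)).mul
        (hg.comp measurable_fst)
    refine (integrable_prod_iff hmeas.aestronglyMeasurable).2 ⟨.of_forall fun u =>
      (integrable_nspline_comp (r + 1) (measurable_id.const_sub u)).mul_const (g u), ?_⟩
    refine hint.norm.congr (.of_forall fun u => ?_)
    simp only [Function.uncurry_apply_pair, norm_mul, Real.norm_of_nonneg (nspline_nonneg _ _),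
      integral_mul_const, ← hN]
  calc ∫ u, Nspline (r + 2) u * g u = ∫ u, ∫ t in Ioc (0:ℝ) 1, Nspline (r + 1) (u - t) * g u := by
        simp only [hN, integral_mul_const]
    _ = ∫ t in Ioc (0:ℝ) 1, ∫ u, Nspline (r + 1) (u - t) * g u := integral_integral_swap hF
    _ = ∫ t in (0:ℝ)..1, ∫ v, Nspline (r + 1) v * g (v + t) := by
        rw [intervalIntegral.integral_of_le zero_le_one]
        refine setIntegral_congr_fun measurableSet_Ioc fun t _ => ?_
        simpa using (integral_add_right_eq_self (fun u => Nspline (r + 1) (u - t) * g u) t).symm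

open scoped fwdDiff

-- `Δ_[1]^[r]` without the space would lex `]^` as the token of the exterior power `⋀[R]^n`.

lemma integral_fwdDiff_iter_comp_add {G H : ℝ → ℝ} {a : ℝ} (r : ℕ)
    (hG : ∀ q ≤ r, IntervalIntegrable (fun t => G (a + q + t)) volume 0 1)
    (hGH : ∀ q ≤ r, ∫ t in (0:ℝ)..1, G (a + q + t) = H (a + q)) :
    ∫ t in (0:ℝ)..1, Δ_[1] ^[r] G (a + t) = Δ_[1] ^[r] H a := by
  have hcomm (t : ℝ) (q : ℕ) : a + t + q = a + q + t := add_right_comm _ _ _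
  simp only [fwdDiff_iter_eq_sum_shift, nsmul_eq_mul, mul_one, zsmul_eq_mul, hcomm]
  rw [intervalIntegral.integral_finsetSum fun q hq =>
    (hG q (Finset.mem_range_succ_iff.1 hq)).const_mul _]
  exact Finset.sum_congr rfl fun q hq => by
    rw [intervalIntegral.integral_const_mul, hGH q (Finset.mem_range_succ_iff.1 hq)]

lemma intervalIntegrable_rpow_comp_add {E x : ℝ} (h : 0 < x ∨ -1 < E) :
    IntervalIntegrable (fun t => (x + t) ^ E) volume 0 1 := by
  have hx : IntervalIntegrable (· ^ E) volume x (x + 1) := by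
    rcases h with hx | hE
    · exact intervalIntegral.intervalIntegrable_rpow
        (.inr fun h0 => by rw [uIcc_of_le (by linarith)] at h0; linarith [h0.1])
    · exact intervalIntegral.intervalIntegrable_rpow' hE
  simpa using hx.comp_add_left x

lemma integral_rpow_comp_add {E x : ℝ} (hE : E ≠ -1) (h : 0 < x ∨ -1 < E) :
    ∫ t in (0:ℝ)..1, (x + t) ^ E = ((x + 1) ^ (E + 1) - x ^ (E + 1)) / (E + 1) := by
  rw [intervalIntegral.integral_comp_add_left (· ^ E), add_zero, integral_rpow]
  rcases h with hx | hE'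
  · exact .inr ⟨hE, fun h0 => by rw [uIcc_of_le (by linarith)] at h0; linarith [h0.1]⟩
  · exact .inl hE'

noncomputable def rpowPrimitive (s : ℝ) (n : ℕ) (x : ℝ) : ℝ :=
  x ^ (s + n) / ∏ j ∈ Finset.range n, (s + j + 1)

lemma intervalIntegrable_rpowPrimitive_comp_add {s x : ℝ} (n : ℕ) (h : 0 < x ∨ -1 < s + n) :
    IntervalIntegrable (fun t => rpowPrimitive s n (x + t)) volume 0 1 :=
  (intervalIntegrable_rpow_comp_add h).div_const _

lemma integral_rpowPrimitive_comp_add {s x : ℝ} (n : ℕ) (hs : s + n + 1 ≠ 0)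
    (h : 0 < x ∨ -1 < s + n) :
    ∫ t in (0:ℝ)..1, rpowPrimitive s n (x + t) = Δ_[1] (rpowPrimitive s (n + 1)) x := by
  have hE : s + n ≠ -1 := fun h' => hs (by linarith)
  simp only [rpowPrimitive, intervalIntegral.integral_div, integral_rpow_comp_add hE h, fwdDiff,
    Finset.prod_range_succ, Nat.cast_add_one, ← add_assoc]
  rw [div_div, ← sub_div, mul_comm]

lemma integrable_nspline_mul_rpow (n : ℕ) {s a : ℝ} (ha : 0 ≤ a) (h : 0 < a ∨ 0 < s + (n + 1)) :
    Integrable fun u => Nspline (n + 1) u * (u + a) ^ s := by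
  have hmeas : Measurable fun u => Nspline (n + 1) u * (u + a) ^ s :=
    (measurable_nspline _).mul (by fun_prop)
  have hsupp :
      Function.support (fun u => Nspline (n + 1) u * (u + a) ^ s) ⊆ Ioc (0:ℝ) (n + 1 : ℕ) := by
    intro u hu
    by_contra hu'
    exact hu (by
      beta_reduce
      rw [nspline_eq_zero_of_notMem fun h' => hu' (Ioo_subset_Ioc_self h'), zero_mul])
  refine (integrableOn_iff_integrable_of_support_subset hsupp).1 ?_
  rcases ha.lt_or_eq with ha | rfl
  · have hg : IntegrableOn (fun u => (u + a) ^ s) (Ioc (0:ℝ) (n + 1 : ℕ)) :=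
      ((continuous_add_const a).continuousOn.rpow_const fun u hu =>
        .inl (by linarith [hu.1])).integrableOn_Icc.mono_set Ioc_subset_Icc_self
    exact hg.bdd_mul (measurable_nspline _).aestronglyMeasurable
      (.of_forall (norm_nspline_le_one _))
  · have hsn : -1 < s + n := by rcases h with h | h <;> linarith
    have hg : IntegrableOn (fun u => u ^ (s + n)) (Ioc (0:ℝ) (n + 1 : ℕ)) :=
      (intervalIntegrable_iff_integrableOn_Ioc_of_le (by positivity)).1
        (intervalIntegral.intervalIntegrable_rpow' hsn)
    refine hg.mono' hmeas.aestronglyMeasurable (ae_restrict_of_forall_mem measurableSet_Ioc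
      fun u hu => ?_)
    have hu0 : 0 < u := hu.1
    rw [add_zero, norm_mul, Real.norm_of_nonneg (nspline_nonneg _ _),
      Real.norm_of_nonneg (by positivity), Real.rpow_add hu0, Real.rpow_natCast, mul_comm]
    exact mul_le_mul_of_nonneg_left (nspline_le_pow n hu0.le) (by positivity)

theorem integral_nspline_mul_rpow (n : ℕ) {s a : ℝ} (hs : ∀ j ≤ n, s + j + 1 ≠ 0) (ha : 0 ≤ a)
    (h : 0 < a ∨ 0 < s + (n + 1)) :
    ∫ u, Nspline (n + 1) u * (u + a) ^ s = Δ_[1] ^[n + 1] (rpowPrimitive s (n + 1)) a := by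
  induction n generalizing a with
  | zero =>
    rw [integral_nspline_one_mul, Function.iterate_one,
      ← integral_rpowPrimitive_comp_add 0 (hs 0 le_rfl)
        (h.imp_right fun h' => by push_cast at h' ⊢; linarith)]
    simp [rpowPrimitive, add_comm]
  | succ n ih =>
    have hpos (q : ℕ) : 0 < a + q ∨ -1 < s + (n + 1 : ℕ) := by
      push_cast at h ⊢
      exact h.imp (fun ha' => by positivity) (fun hs' => by linarith)
    rw [integral_nspline_succ_succ_mul n (by fun_prop) (integrable_nspline_mul_rpow (n + 1) ha h),
      Function.iterate_succ_apply, ← integral_fwdDiff_iter_comp_add (n + 1)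
        (fun q _ => intervalIntegrable_rpowPrimitive_comp_add _ (hpos q))
        (fun q _ => integral_rpowPrimitive_comp_add _ (hs (n + 1) le_rfl) (hpos q))]
    refine intervalIntegral.integral_congr_ae (.of_forall fun t ht => ?_)
    rw [uIoc_of_le zero_le_one] at ht
    simp_rw [add_assoc, add_comm t a]
    exact ih (fun j hj => hs j (by omega)) (by linarith [ht.1]) (.inl (by linarith [ht.1]))

lemma Real.Gamma_natCast_sub {k : ℝ} (hk : ∀ n : ℕ, (n : ℝ) ≠ k) (r : ℕ) :
    Real.Gamma (r - k) = Real.Gamma (-k) * ∏ j ∈ Finset.range r, ((j : ℝ) - k) := by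
  induction r with
  | zero => simp
  | succ r ih =>
    rw [Finset.prod_range_succ, ← mul_assoc, ← ih, Nat.cast_succ, add_sub_right_comm,
      Real.Gamma_add_one (sub_ne_zero.2 (hk r)), mul_comm]

lemma prod_range_sub_add_add_one (k : ℝ) (r : ℕ) :
    ∏ j ∈ Finset.range r, (k - r + j + 1) = (-1) ^ r * ∏ j ∈ Finset.range r, ((j : ℝ) - k) := by
  have hneg := Finset.pow_card_mul_prod (s := Finset.range r) (f := fun j : ℕ => (j : ℝ) - k)
    (b := -1)
  rw [Finset.card_range] at hneg
  rw [hneg, ← Finset.prod_range_reflect]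
  refine Finset.prod_congr rfl fun j hj => ?_
  rw [Nat.sub_sub, Nat.cast_sub (by simp at hj; omega)]
  push_cast
  ring

lemma neg_one_pow_sub_of_le {R : Type*} [Monoid R] [HasDistribNeg R] {m r : ℕ} (hm : m ≤ r) :
    (-1 : R) ^ (r - m) = (-1) ^ r * (-1) ^ m := by
  rw [← pow_sub_mul_pow _ hm, mul_assoc, ← pow_add, ← two_mul, pow_mul]; simp

lemma fwdDiff_iter_rpowPrimitive_zero {k : ℝ} (hk : ∀ n : ℕ, (n : ℝ) ≠ k) (r : ℕ) :
    Δ_[1] ^[r] (rpowPrimitive (k - r) r) 0 = kappa k r / Real.Gamma (r - k) := by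
  have hΓ : Real.Gamma (-k) ≠ 0 := Real.Gamma_ne_zero fun m h => hk m (by linarith)
  rw [fwdDiff_iter_eq_sum_shift, kappa, Real.Gamma_natCast_sub hk, mul_div_mul_left _ _ hΓ,
    Finset.sum_div]
  refine Finset.sum_congr rfl fun m hm => ?_
  simp only [rpowPrimitive, prod_range_sub_add_add_one, zsmul_eq_mul, nsmul_eq_mul, mul_one,
    zero_add, sub_add_cancel]
  push_cast
  rw [neg_one_pow_sub_of_le (Finset.mem_range_succ_iff.1 hm)]
  field_simp

theorem bspline_moment_general (r : ℕ) (hr : 1 ≤ r) (k : ℝ) (hk0 : 0 < k)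
    (hknat : ∀ n : ℕ, (n : ℝ) ≠ k) :
    ∫ u in (0:ℝ)..(r:ℝ), Nspline r u / u ^ ((r:ℝ) - k)
      = kappa k r / Real.Gamma ((r:ℝ) - k) := by
  obtain ⟨n, rfl⟩ := Nat.exists_eq_add_of_le' hr
  have hs (j : ℕ) (hj : j ≤ n) : k - (n + 1 : ℕ) + j + 1 ≠ 0 := fun h =>
    hknat (n - j) (by push_cast [Nat.cast_sub hj] at h ⊢; linarith)
  rw [← fwdDiff_iter_rpowPrimitive_zero hknat,
    ← integral_nspline_mul_rpow n hs le_rfl (.inr (by push_cast; linarith)),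
    integral_nspline_mul_eq_intervalIntegral]
  refine intervalIntegral.integral_congr_ae (.of_forall fun u hu => ?_)
  rw [uIoc_of_le (Nat.cast_nonneg _)] at hu
  rw [add_zero, div_eq_mul_inv, ← Real.rpow_neg hu.1.le, neg_sub]

/-- For `r ∈ ℕ` and non-integer `k ∈ (0,r)`: `∫_0^r N_r(u)/u^{r-k} du = κ(k,r)/Γ(r-k)`. -/
theorem bspline_moment (r : ℕ) (hr : 1 ≤ r) (k : ℝ) (hk0 : 0 < k) (hkr : k < r)
    (hknat : ∀ n : ℕ, (n : ℝ) ≠ k) :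
    ∫ u in (0:ℝ)..(r:ℝ), Nspline r u / u ^ ((r:ℝ) - k)
      = kappa k r / Real.Gamma ((r:ℝ) - k) :=
  bspline_moment_general r hr k hk0 hknat
end

section
/- For k ∈ (0,1), the L_1(ℝ)-norm of the Marchaud fractional derivative of the indicator function χ_{(0,h)} equals 2h^{1-k}/Γ(2-k), for every h > 0. -/
open MeasureTheory Set ENNReal

/-- `(Δ^r_{-t} f)(x) = ∑_{m=0}^{r} (-1)^m C(r,m) f(x + m t)`. -/
noncomputable def backDiff (r : ℕ) (t : ℝ) (f : ℝ → ℝ) (x : ℝ) : ℝ :=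
  ∑ m ∈ Finset.range (r+1), (-1:ℝ)^m * (r.choose m : ℝ) * f (x + m * t)

/-- The Marchaud fractional derivative. -/
noncomputable def marchaud (k : ℝ) (r : ℕ) (f : ℝ → ℝ) (x : ℝ) : ℝ :=
  (1 / kappa k r) * ∫ t in Set.Ioi (0:ℝ), backDiff r t f x / t ^ (1 + k)

/-!
Substituting `κ(k,1) = Γ(1-k)/k` and evaluating the inner integral gives, for `x ≠ 0`,
`D^k_- χ_{(0,h)}(x) = ((h - x)₊^{-k} - (-x)₊^{-k}) / Γ(1-k)`.
On `(0, ∞)` this is `(h - x)^{-k} / Γ(1-k)` on `(0, h)` and `0` beyond, with integral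
`h^{1-k} / ((1-k) Γ(1-k))`. On `(-∞, 0)` it is negative, and after `x = -y` its absolute value
`y^{-k} - (h + y)^{-k}` has the antiderivative `(y^{1-k} - (h + y)^{1-k}) / (1-k)`, which tends to
`0` at infinity; so this half contributes the same amount. Finally `(1-k) Γ(1-k) = Γ(2-k)`.
-/

open Real Filter Topology

lemma backDiff_one (t : ℝ) (f : ℝ → ℝ) (x : ℝ) : backDiff 1 t f x = f x - f (x + t) := by
  simp [backDiff, Finset.sum_range_succ, sub_eq_add_neg]

lemma kappa_one {k : ℝ} (hk : k ≠ 0) : kappa k 1 = Gamma (1 - k) / k := by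
  have hκ : kappa k 1 = -Gamma (-k) := by simp [kappa, Finset.sum_range_succ, zero_rpow hk]
  have hΓ : Gamma (1 - k) = -k * Gamma (-k) := by
    rw [← Gamma_add_one (neg_ne_zero.mpr hk)]
    ring_nf
  rw [hκ, hΓ]
  field_simp

section indicator

variable {k h x : ℝ}

lemma integral_indicator_Ioo_sub_div_rpow_of_neg (hk : k ≠ 0) (hh : 0 ≤ h) (hx : x < 0) :
    ∫ t in Ioi 0, ((Ioo 0 h).indicator (fun _ => (1 : ℝ)) x
      - (Ioo 0 h).indicator (fun _ => (1 : ℝ)) (x + t)) / t ^ (1 + k)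
      = ((h - x) ^ (-k) - (-x) ^ (-k)) / k := by
  have hχ : ∀ t ∈ Ioi (0 : ℝ), ((Ioo 0 h).indicator (fun _ => (1 : ℝ)) x
      - (Ioo 0 h).indicator (fun _ => (1 : ℝ)) (x + t)) / t ^ (1 + k)
      = -(Ioo (-x) (h - x)).indicator (fun t => t ^ (-(1 + k))) t := by
    intro t (ht : 0 < t)
    simp only [indicator_apply, mem_Ioo, rpow_neg ht.le]
    split_ifs <;> first | (exfalso; grind) | simp [div_eq_mul_inv]
  have hx' : 0 < -x := neg_pos.mpr hx
  rw [setIntegral_congr_fun measurableSet_Ioi hχ, integral_neg,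
    setIntegral_indicator measurableSet_Ioo,
    inter_eq_right.mpr (Ioo_subset_Ioi_self.trans (Ioi_subset_Ioi hx'.le)),
    ← integral_Ioc_eq_integral_Ioo, ← intervalIntegral.integral_of_le (by linarith),
    integral_rpow (Or.inr ⟨fun h1 => hk (by linarith), notMem_uIcc_of_lt hx' (by linarith)⟩)]
  ring_nf

lemma integral_indicator_Ioo_sub_div_rpow_of_pos_of_lt (hk : 0 < k) (hx0 : 0 < x) (hxh : x < h) :
    ∫ t in Ioi 0, ((Ioo 0 h).indicator (fun _ => (1 : ℝ)) x
      - (Ioo 0 h).indicator (fun _ => (1 : ℝ)) (x + t)) / t ^ (1 + k)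
      = (h - x) ^ (-k) / k := by
  have hχ : ∀ t ∈ Ioi (0 : ℝ), ((Ioo 0 h).indicator (fun _ => (1 : ℝ)) x
      - (Ioo 0 h).indicator (fun _ => (1 : ℝ)) (x + t)) / t ^ (1 + k)
      = (Ici (h - x)).indicator (fun t => t ^ (-(1 + k))) t := by
    intro t (ht : 0 < t)
    simp only [indicator_apply, mem_Ioo, mem_Ici, rpow_neg ht.le]
    split_ifs <;> first | (exfalso; grind) | simp [div_eq_mul_inv]
  have hhx : 0 < h - x := sub_pos.mpr hxh
  rw [setIntegral_congr_fun measurableSet_Ioi hχ, setIntegral_indicator measurableSet_Ici,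
    inter_eq_right.mpr (Ici_subset_Ioi.mpr hhx), integral_Ici_eq_integral_Ioi,
    integral_Ioi_rpow_of_lt (by linarith) hhx]
  ring_nf

lemma integral_indicator_Ioo_sub_div_rpow_of_le (hx : h ≤ x) :
    ∫ t in Ioi 0, ((Ioo 0 h).indicator (fun _ => (1 : ℝ)) x
      - (Ioo 0 h).indicator (fun _ => (1 : ℝ)) (x + t)) / t ^ (1 + k) = 0 := by
  refine setIntegral_eq_zero_of_forall_eq_zero fun t (ht : 0 < t) => ?_
  rw [indicator_of_notMem (fun hm => by linarith [hm.2]),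
    indicator_of_notMem (fun hm => by linarith [hm.2]), sub_zero, zero_div]

-- At `x = 0` the integrand is not integrable near `t = 0`, so the integral is the junk value `0`.
lemma integral_indicator_Ioo_sub_div_rpow (hk : 0 < k) (hh : 0 ≤ h) (hx : x ≠ 0) :
    ∫ t in Ioi 0, ((Ioo 0 h).indicator (fun _ => (1 : ℝ)) x
      - (Ioo 0 h).indicator (fun _ => (1 : ℝ)) (x + t)) / t ^ (1 + k)
      = ((h - x)⁺ ^ (-k) - x⁻ ^ (-k)) / k := by
  have h0 : (0 : ℝ) ^ (-k) = 0 := zero_rpow (neg_ne_zero.mpr hk.ne')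
  rcases hx.lt_or_gt with hx | hx
  · rw [integral_indicator_Ioo_sub_div_rpow_of_neg hk.ne' hh hx, posPart_of_nonneg (by linarith),
      negPart_eq_neg.mpr hx.le]
  rcases lt_or_ge x h with hxh | hxh
  · rw [integral_indicator_Ioo_sub_div_rpow_of_pos_of_lt hk hx hxh,
      posPart_of_nonneg (by linarith), negPart_of_nonneg hx.le, h0, sub_zero]
  · rw [integral_indicator_Ioo_sub_div_rpow_of_le hxh, posPart_of_nonpos (by linarith),
      negPart_of_nonneg hx.le, h0, sub_self, zero_div]

lemma marchaud_one_indicator_Ioo (hk : 0 < k) (hh : 0 ≤ h) (hx : x ≠ 0) :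
    marchaud k 1 ((Ioo 0 h).indicator fun _ => (1 : ℝ)) x
      = ((h - x)⁺ ^ (-k) - x⁻ ^ (-k)) / Gamma (1 - k) := by
  simp only [marchaud, backDiff_one, kappa_one hk.ne']
  rw [integral_indicator_Ioo_sub_div_rpow hk hh hx]
  field_simp

end indicator

lemma tendsto_add_rpow_sub_rpow_atTop {p h : ℝ} (hp0 : 0 ≤ p) (hp1 : p < 1) (hh : 0 ≤ h) :
    Tendsto (fun y => (h + y) ^ p - y ^ p) atTop (𝓝 0) := by
  have hbound : Tendsto (fun y => h * y ^ (p - 1)) atTop (𝓝 0) := by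
    simpa using (tendsto_rpow_neg_atTop (sub_pos.mpr hp1)).const_mul h
  refine tendsto_of_tendsto_of_tendsto_of_le_of_le' tendsto_const_nhds hbound ?_ ?_
  all_goals filter_upwards [eventually_gt_atTop 0] with y hy
  · exact sub_nonneg.mpr (rpow_le_rpow hy.le (by linarith) hp0)
  · have hy' : 0 < h + y := by linarith
    have hdecr : (h + y) ^ (p - 1) ≤ y ^ (p - 1) :=
      rpow_le_rpow_of_nonpos hy (by linarith) (by linarith)
    have hsplit : ∀ z : ℝ, 0 < z → z ^ p = z * z ^ (p - 1) := fun z hz => by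
      rw [mul_comm, ← rpow_add_one hz.ne', sub_add_cancel]
    rw [hsplit _ hy', hsplit _ hy, sub_le_iff_le_add, add_mul]
    gcongr

section profile

variable {k h : ℝ}

lemma integral_Ioi_rpow_sub_rpow_add (hk0 : 0 < k) (hk1 : k < 1) (hh : 0 ≤ h) :
    ∫ y in Ioi 0, (y ^ (-k) - (h + y) ^ (-k)) = h ^ (1 - k) / (1 - k) := by
  have hk1' : 1 - k ≠ 0 := by linarith
  set Φ : ℝ → ℝ := fun y => (y ^ (1 - k) - (h + y) ^ (1 - k)) / (1 - k) with hΦ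
  have hcont : ContinuousWithinAt Φ (Ici 0) 0 :=
    ContinuousAt.continuousWithinAt (by fun_prop (disch := right; linarith))
  have hderiv : ∀ y ∈ Ioi (0 : ℝ), HasDerivAt Φ (y ^ (-k) - (h + y) ^ (-k)) y := by
    intro y (hy : 0 < y)
    refine ((((hasDerivAt_id' y).rpow_const (p := 1 - k) (Or.inl hy.ne')).sub
      (((hasDerivAt_id' y).const_add h).rpow_const (p := 1 - k) (Or.inl (by linarith)))).div_const
      (1 - k)).congr_deriv ?_
    rw [show 1 - k - 1 = -k by ring]
    field_simp
  have hnonneg : ∀ y ∈ Ioi (0 : ℝ), 0 ≤ y ^ (-k) - (h + y) ^ (-k) := fun y (hy : 0 < y) =>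
    sub_nonneg.mpr (rpow_le_rpow_of_nonpos hy (by linarith) (by linarith))
  have hlim : Tendsto Φ atTop (𝓝 0) := by
    simpa [hΦ, neg_sub] using ((tendsto_add_rpow_sub_rpow_atTop (p := 1 - k) (by linarith)
      (by linarith) hh).neg.div_const (1 - k))
  rw [integral_Ioi_of_hasDerivAt_of_nonneg hcont hderiv hnonneg hlim]
  simp only [hΦ, add_zero, zero_rpow hk1']
  ring

lemma setIntegral_Iic_abs_posPart_rpow_sub_negPart_rpow (hk0 : 0 < k) (hk1 : k < 1) (hh : 0 ≤ h) :
    ∫ x in Iic 0, |(h - x)⁺ ^ (-k) - x⁻ ^ (-k)| = h ^ (1 - k) / (1 - k) := by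
  have hreflect := integral_comp_neg_Ioi 0 fun x => |(h - x)⁺ ^ (-k) - x⁻ ^ (-k)|
  rw [neg_zero] at hreflect
  rw [← hreflect, ← integral_Ioi_rpow_sub_rpow_add hk0 hk1 hh]
  refine setIntegral_congr_fun measurableSet_Ioi fun y (hy : 0 < y) => ?_
  rw [sub_neg_eq_add, posPart_of_nonneg (by linarith), negPart_eq_neg.mpr (by linarith), neg_neg,
    abs_sub_comm, abs_of_nonneg (sub_nonneg.mpr (rpow_le_rpow_of_nonpos hy (by linarith)
    (by linarith)))]

lemma setIntegral_Ioi_abs_posPart_rpow_sub_negPart_rpow (hk0 : 0 < k) (hk1 : k < 1) (hh : 0 ≤ h) :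
    ∫ x in Ioi 0, |(h - x)⁺ ^ (-k) - x⁻ ^ (-k)| = h ^ (1 - k) / (1 - k) := by
  have h0 : (0 : ℝ) ^ (-k) = 0 := zero_rpow (neg_ne_zero.mpr hk0.ne')
  have hχ : ∀ x ∈ Ioi (0 : ℝ),
      |(h - x)⁺ ^ (-k) - x⁻ ^ (-k)| = (Iio h).indicator (fun x => (h - x) ^ (-k)) x := by
    intro x (hx : 0 < x)
    rw [negPart_of_nonneg hx.le, h0, sub_zero, abs_of_nonneg (rpow_nonneg (posPart_nonneg _) _)]
    rcases lt_or_ge x h with hxh | hxh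
    · rw [indicator_of_mem (mem_Iio.mpr hxh), posPart_of_nonneg (by linarith)]
    · rw [indicator_of_notMem (notMem_Iio.mpr hxh), posPart_of_nonpos (by linarith), h0]
  rw [setIntegral_congr_fun measurableSet_Ioi hχ, setIntegral_indicator measurableSet_Iio,
    Ioi_inter_Iio, ← integral_Ioc_eq_integral_Ioo, ← intervalIntegral.integral_of_le hh,
    intervalIntegral.integral_comp_sub_left (fun x => x ^ (-k)), sub_self, sub_zero,
    integral_rpow (Or.inl (by linarith)), zero_rpow (by linarith), neg_add_eq_sub, sub_zero]

lemma integral_abs_posPart_rpow_sub_negPart_rpow (hk0 : 0 < k) (hk1 : k < 1) (hh : 0 < h) :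
    ∫ x, |(h - x)⁺ ^ (-k) - x⁻ ^ (-k)| = 2 * h ^ (1 - k) / (1 - k) := by
  have hleft := setIntegral_Iic_abs_posPart_rpow_sub_negPart_rpow hk0 hk1 hh.le
  have hright := setIntegral_Ioi_abs_posPart_rpow_sub_negPart_rpow hk0 hk1 hh.le
  have hne : h ^ (1 - k) / (1 - k) ≠ 0 :=
    (div_pos (rpow_pos_of_pos hh _) (sub_pos.mpr hk1)).ne'
  -- A non-integrable function has integral `0`, so both halves are integrable.
  rw [← intervalIntegral.integral_Iic_add_Ioi (.of_integral_ne_zero (hleft ▸ hne))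
    (.of_integral_ne_zero (hright ▸ hne)), hleft, hright]
  ring

end profile

/-- For `k ∈ (0,1)` and `h > 0`, the `L_1(ℝ)`-norm of the Marchaud fractional derivative of
the indicator function `χ_{(0,h)}` equals `2h^{1-k}/Γ(2-k)`. -/
theorem marchaud_indicator_L1_norm (k : ℝ) (hk0 : 0 < k) (hk1 : k < 1) (h : ℝ) (hh : 0 < h) :
    ∫ x : ℝ, |marchaud k 1 (Set.indicator (Set.Ioo 0 h) (fun _ => (1:ℝ))) x|
      = 2 * h ^ (1 - k) / Real.Gamma (2 - k) := by
  have hΓ : Gamma (2 - k) = (1 - k) * Gamma (1 - k) := by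
    rw [← Gamma_add_one (by linarith)]
    ring_nf
  have hΓpos : 0 < Gamma (1 - k) := Gamma_pos_of_pos (by linarith)
  have hmarchaud : (fun x => |marchaud k 1 ((Ioo 0 h).indicator fun _ => (1 : ℝ)) x|)
      =ᵐ[volume] fun x => |(h - x)⁺ ^ (-k) - x⁻ ^ (-k)| / Gamma (1 - k) := by
    filter_upwards [compl_mem_ae_iff.mpr (measure_singleton (0 : ℝ))] with x (hx : x ≠ 0)
    rw [marchaud_one_indicator_Ioo hk0 hh.le hx, abs_div, abs_of_pos hΓpos]
  rw [integral_congr_ae hmarchaud, integral_div,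
    integral_abs_posPart_rpow_sub_negPart_rpow hk0 hk1 hh, hΓ]
  field_simp
end

section
/- Let k ∈ (0,1) and define on ℝ₊: Ω(x) = 0 for x = 0, Ω(x) = h^{-k}/Γ(2-k) for x ∈ (0,h), Ω(x) = x^{-k}/Γ(1-k) for x ≥ h, where h > 0. Then for every f: ℝ₊ → ℝ bounded with f' locally absolutely continuous and f'' bounded, the identity D^k_- f(0) − ∫_0^∞ f(x) dΩ(x) = ∫_0^∞ (R_{2-k}(t) − Ω^{[1]}(t)) f''(t) dt holds, where Ω^{[1]}(t) = ∫_0^t Ω(u) du and R_{2-k}(t) = t^{1-k}/Γ(2-k) for t > 0. -/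
open MeasureTheory Set ENNReal

/-- The function `Ω` on `ℝ₊` (case `r = 2`, `k ∈ (0,1)`). -/
noncomputable def Omega₂ (k h : ℝ) (x : ℝ) : ℝ :=
  if x ≤ 0 then 0
  else if x < h then h ^ (-k) / Real.Gamma (2 - k)
  else x ^ (-k) / Real.Gamma (1 - k)

/-- `Ω^{[1]}(t) = ∫_0^t Ω(u) du`. -/
noncomputable def Omega₂Int (k h : ℝ) (t : ℝ) : ℝ := ∫ u in (0:ℝ)..t, Omega₂ k h u

/-- `R_{2-k}(t) = t^{1-k}/Γ(2-k)` for `t > 0`, `0` otherwise. -/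
noncomputable def R2k (k : ℝ) (t : ℝ) : ℝ :=
  if 0 < t then t ^ (1 - k) / Real.Gamma (2 - k) else 0

/-- The Stieltjes integral `∫_0^∞ f dΩ` for `Ω = Omega₂ k h`: the jump of size
`h^{-k}/Γ(2-k)` at `0`, the jump of size `−k h^{-k}/Γ(2-k)` at `h`, and the absolutely
continuous part `dΩ = −k x^{-1-k}/Γ(1-k) dx` on `(h,∞)`. -/
noncomputable def stieltjesOmega₂ (k h : ℝ) (f : ℝ → ℝ) : ℝ :=
  f 0 * (h ^ (-k) / Real.Gamma (2 - k)) - f h * (k * h ^ (-k) / Real.Gamma (2 - k))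
    - (k / Real.Gamma (1 - k)) * ∫ x in Set.Ioi h, f x * x ^ (-1 - k)

/-!
Put `g = f - f 0` and `I = ∫₀^∞ g t * t ^ (-1 - k) dt`, split at `h` as `I₁ + I₂`.
The second difference at `0` is `g (2t) - 2 g t`, so the substitution `t ↦ 2t` gives
`D^k f(0) = I / Γ(-k) = -(k / Γ(1-k)) I`. The kernel `R_{2-k} - Ω^{[1]}` vanishes on `[h, ∞)`
and is `(t ^ (1-k) - t h ^ (-k)) / Γ(2-k)` on `(0, h]`; integrating by parts twice there
(the boundary term at `0` vanishes because `g t = O(t)`) turns the right-hand side into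
`(k h ^ (-k) g h - k (1-k) I₁) / Γ(2-k)`. The jumps of `Ω` at `0` and `h` together with its
absolutely continuous part contribute exactly the remaining `g h` and `I₂` terms.
-/

section

open Real Filter Topology

variable {k h t : ℝ}

theorem integrableOn_Ioi_mul_rpow_neg_one_sub (hk0 : 0 < k) (hk1 : k < 1) {w : ℝ → ℝ}
    (hw : ContinuousOn w (Ioi 0)) {L C : ℝ} (h_zero : ∀ t ∈ Ioc (0 : ℝ) 1, |w t| ≤ L * t)
    (h_top : ∀ t ∈ Ioi (1 : ℝ), |w t| ≤ C) :
    IntegrableOn (fun t ↦ w t * t ^ (-1 - k)) (Ioi 0) := by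
  have hmeas : ∀ s ⊆ Ioi (0 : ℝ), MeasurableSet s →
      AEStronglyMeasurable (fun t ↦ w t * t ^ (-1 - k)) (volume.restrict s) := fun s hs hms ↦
    ContinuousOn.aestronglyMeasurable
      ((hw.mono hs).mul (continuousOn_id.rpow_const fun t ht ↦ Or.inl (hs ht).ne')) hms
  have hnorm : ∀ t : ℝ, 0 < t → ‖w t * t ^ (-1 - k)‖ = |w t| * t ^ (-1 - k) :=
    fun t ht ↦ by rw [norm_mul, Real.norm_eq_abs, Real.norm_of_nonneg (rpow_nonneg ht.le _)]
  rw [← Ioc_union_Ioi_eq_Ioi zero_le_one]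
  refine IntegrableOn.union ?_ ?_
  · have hdom := (intervalIntegral.intervalIntegrable_rpow' (a := 0) (b := 1)
      (by linarith : (-1 : ℝ) < -k)).1
    refine (hdom.const_mul L).mono' (hmeas _ (fun t ht ↦ ht.1) measurableSet_Ioc)
      (ae_restrict_of_forall_mem measurableSet_Ioc fun t ht ↦ ?_)
    calc ‖w t * t ^ (-1 - k)‖ = |w t| * t ^ (-1 - k) := hnorm t ht.1
      _ ≤ L * t * t ^ (-1 - k) := mul_le_mul_of_nonneg_right (h_zero t ht) (rpow_nonneg ht.1.le _)
      _ = L * t ^ (-k) := by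
        rw [show -k = 1 + (-1 - k) by ring, rpow_add ht.1, Real.rpow_one]; ring
  · refine ((integrableOn_Ioi_rpow_of_lt (by linarith : -1 - k < -1) one_pos).const_mul C).mono'
      (hmeas _ (fun t (ht : 1 < t) ↦ zero_lt_one.trans ht) measurableSet_Ioi)
      (ae_restrict_of_forall_mem measurableSet_Ioi fun t ht ↦ ?_)
    rw [hnorm t (zero_lt_one.trans ht)]
    exact mul_le_mul_of_nonneg_right (h_top t ht) (rpow_nonneg (zero_lt_one.trans ht).le _)

theorem mul_rpow_eq_rpow_neg_mul {c t : ℝ} (hc : 0 < c) (ht : 0 ≤ t) (a p : ℝ) :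
    a * t ^ p = c ^ (-p) * (a * (c * t) ^ p) := by
  rw [mul_rpow hc.le ht, rpow_neg hc.le]
  field_simp

theorem integrableOn_Ioi_comp_mul_left_mul_rpow {g : ℝ → ℝ} {p c : ℝ} (hc : 0 < c)
    (hg : IntegrableOn (fun t ↦ g t * t ^ p) (Ioi 0)) :
    IntegrableOn (fun t ↦ g (c * t) * t ^ p) (Ioi 0) := by
  have := ((integrableOn_Ioi_comp_mul_left_iff (fun t ↦ g t * t ^ p) 0 hc).2
    (by rwa [mul_zero])).const_mul (c ^ (-p))
  exact IntegrableOn.congr_fun this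
    (fun t ht ↦ (mul_rpow_eq_rpow_neg_mul hc (le_of_lt ht) _ _).symm) measurableSet_Ioi

theorem integral_Ioi_comp_mul_left_mul_rpow {c : ℝ} (hc : 0 < c) (g : ℝ → ℝ) (p : ℝ) :
    ∫ t in Ioi 0, g (c * t) * t ^ p = c ^ (-1 - p) * ∫ t in Ioi 0, g t * t ^ p := by
  rw [setIntegral_congr_fun measurableSet_Ioi
      (fun t ht ↦ mul_rpow_eq_rpow_neg_mul hc (le_of_lt ht) (g (c * t)) p),
    integral_const_mul, integral_comp_mul_left_Ioi (fun t ↦ g t * t ^ p) 0 hc, mul_zero,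
    smul_eq_mul, ← mul_assoc, ← rpow_neg_one c, ← rpow_add hc]
  ring_nf

theorem integral_Ioi_eq_integral_Ioc_add_integral_Ioi {g : ℝ → ℝ} {a b : ℝ} (hab : a ≤ b)
    (hg : IntegrableOn g (Ioi a)) :
    ∫ t in Ioi a, g t = (∫ t in Ioc a b, g t) + ∫ t in Ioi b, g t := by
  rw [← Ioc_union_Ioi_eq_Ioi hab] at hg ⊢
  exact setIntegral_union Ioc_disjoint_Ioi_same measurableSet_Ioi
    (hg.mono_set subset_union_left) (hg.mono_set subset_union_right)

theorem exists_abs_sub_le_mul_of_hasDerivAt {g g' : ℝ → ℝ} {a b : ℝ}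
    (hg : ∀ t ∈ Icc a b, HasDerivAt g (g' t) t) (hg' : ContinuousOn g' (Icc a b)) :
    ∃ L, ∀ t ∈ Icc a b, |g t - g a| ≤ L * (t - a) := by
  obtain ⟨L, hL⟩ := isCompact_Icc.exists_bound_of_continuousOn hg'
  exact ⟨L, norm_image_sub_le_of_norm_deriv_le_segment' (fun t ht ↦ (hg t ht).hasDerivWithinAt)
    fun t ht ↦ hL t (Ico_subset_Icc_self ht)⟩

theorem integrableOn_Icc_mul_of_hasDerivAt_of_abs_le {w φ φ' : ℝ → ℝ} {a b C : ℝ}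
    (hw : ContinuousOn w (Icc a b)) (hφ : ∀ t ∈ Icc a b, HasDerivAt φ (φ' t) t)
    (hC : ∀ t ∈ Icc a b, |φ' t| ≤ C) : IntegrableOn (fun t ↦ w t * φ' t) (Icc a b) := by
  have hφ' : IntegrableOn φ' (Icc a b) :=
    Integrable.of_bound ((measurable_deriv φ).aestronglyMeasurable.congr
        (ae_restrict_of_forall_mem measurableSet_Icc fun t ht ↦ (hφ t ht).deriv)) C
      (ae_restrict_of_forall_mem measurableSet_Icc hC)
  exact hφ'.continuousOn_mul hw isCompact_Icc

theorem integrableOn_Ioi_sub_mul_rpow (hk0 : 0 < k) (hk1 : k < 1) {f f' : ℝ → ℝ} {C : ℝ}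
    (hf : ∀ x ≥ 0, HasDerivAt f (f' x) x) (hf' : ContinuousOn f' (Icc 0 1))
    (hC : ∀ x ≥ 0, |f x| ≤ C) :
    IntegrableOn (fun t ↦ (f t - f 0) * t ^ (-1 - k)) (Ioi 0) := by
  obtain ⟨L, hL⟩ := exists_abs_sub_le_mul_of_hasDerivAt (fun t ht ↦ hf t ht.1) hf'
  refine integrableOn_Ioi_mul_rpow_neg_one_sub hk0 hk1 (C := C + C)
    (fun t ht ↦ ((hf t (le_of_lt ht)).continuousAt.sub continuousAt_const).continuousWithinAt)
    (fun t ht ↦ by simpa using hL t (Ioc_subset_Icc_self ht)) fun t ht ↦ ?_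
  exact (abs_sub _ _).trans (add_le_add (hC t (zero_le_one.trans ht.le)) (hC 0 le_rfl))

theorem tendsto_rpow_neg_mul_nhdsGT_zero (hk1 : k < 1) {g : ℝ → ℝ} {c : ℝ} (hg0 : g 0 = 0)
    (hg : HasDerivAt g c 0) : Tendsto (fun t ↦ t ^ (-k) * g t) (𝓝[>] 0) (𝓝 0) := by
  have hpow : Tendsto (fun t : ℝ ↦ t ^ (1 - k)) (𝓝[>] 0) (𝓝 0) :=
    ((continuous_rpow_const (sub_pos.2 hk1).le).tendsto' 0 0
      (zero_rpow (sub_pos.2 hk1).ne')).mono_left nhdsWithin_le_nhds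
  have := hpow.mul hg.tendsto_slope_zero_right
  rw [zero_mul] at this
  refine this.congr' (eventually_mem_nhdsWithin.mono fun t (ht : 0 < t) ↦ ?_)
  rw [zero_add, hg0, sub_zero, smul_eq_mul, ← mul_assoc, ← div_eq_mul_inv,
    ← rpow_sub_one ht.ne', show 1 - k - 1 = -k by ring]

theorem Gamma_two_sub (hk : k ≠ 1) : Gamma (2 - k) = (1 - k) * Gamma (1 - k) := by
  rw [show 2 - k = (1 - k) + 1 by ring, Gamma_add_one (sub_ne_zero.2 hk.symm)]

theorem kappa_two (hk0 : k ≠ 0) : kappa k 2 = Gamma (-k) * (2 ^ k - 2) := by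
  rw [kappa]
  congr 1
  norm_num [Finset.sum_range_succ, zero_rpow hk0]
  ring

theorem backDiff_two (t : ℝ) (f : ℝ → ℝ) (x : ℝ) :
    backDiff 2 t f x = f x - 2 * f (x + t) + f (x + 2 * t) := by
  simp [backDiff, Finset.sum_range_succ, sub_eq_add_neg]

theorem marchaud_two_zero (hk0 : 0 < k) (hk1 : k < 1) {f : ℝ → ℝ}
    (hf : IntegrableOn (fun t ↦ (f t - f 0) * t ^ (-1 - k)) (Ioi 0)) :
    marchaud k 2 f 0 = -(k / Gamma (1 - k)) * ∫ t in Ioi 0, (f t - f 0) * t ^ (-1 - k) := by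
  have h2k : (2 : ℝ) ^ k - 2 ≠ 0 := by
    rw [sub_ne_zero]
    intro h2
    exact hk1.ne ((rpow_right_inj two_pos (by norm_num)).1 (h2.trans (Real.rpow_one 2).symm))
  have hΓ : Gamma (1 - k) = -k * Gamma (-k) := by
    rw [show 1 - k = -k + 1 by ring, Gamma_add_one (neg_ne_zero.2 hk0.ne')]
  have hΓ0 : Gamma (-k) ≠ 0 :=
    right_ne_zero_of_mul (hΓ ▸ (Gamma_pos_of_pos (sub_pos.2 hk1)).ne')
  have hdiff : ∀ t ∈ Ioi (0 : ℝ), backDiff 2 t f 0 / t ^ (1 + k)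
      = -2 * ((f t - f 0) * t ^ (-1 - k)) + (f (2 * t) - f 0) * t ^ (-1 - k) := fun t ht ↦ by
    rw [backDiff_two, div_eq_mul_inv, ← rpow_neg (le_of_lt ht), neg_add', zero_add, zero_add]
    ring
  rw [marchaud, kappa_two hk0.ne', hΓ, setIntegral_congr_fun measurableSet_Ioi hdiff,
    integral_add (hf.const_mul _) (integrableOn_Ioi_comp_mul_left_mul_rpow two_pos hf),
    integral_const_mul, integral_Ioi_comp_mul_left_mul_rpow two_pos (fun t ↦ f t - f 0),
    show -1 - (-1 - k) = k by ring]
  generalize ∫ t in Ioi 0, (f t - f 0) * t ^ (-1 - k) = I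
  field_simp
  ring

theorem Omega₂Int_of_le (ht : 0 ≤ t) (hth : t ≤ h) :
    Omega₂Int k h t = t * (h ^ (-k) / Gamma (2 - k)) := by
  rw [Omega₂Int, intervalIntegral.integral_congr_Ioo_of_le ht
      (g := fun _ ↦ h ^ (-k) / Gamma (2 - k)) fun u hu ↦ ?_, intervalIntegral.integral_const,
    sub_zero, smul_eq_mul]
  simp [Omega₂, not_le.2 hu.1, hu.2.trans_le hth]

theorem Omega₂Int_of_ge (hk1 : k ≠ 1) (hh : 0 < h) (ht : h ≤ t) :
    Omega₂Int k h t = t ^ (1 - k) / Gamma (2 - k) := by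
  have h_head : EqOn (fun _ ↦ h ^ (-k) / Gamma (2 - k)) (Omega₂ k h) (uIoo 0 h) := by
    intro u hu
    rw [uIoo_of_le hh.le] at hu
    simp [Omega₂, not_le.2 hu.1, hu.2]
  have h_tail : EqOn (fun u ↦ u ^ (-k) / Gamma (1 - k)) (Omega₂ k h) (uIcc h t) := by
    intro u hu
    rw [uIcc_of_le ht] at hu
    simp [Omega₂, not_le.2 (hh.trans_le hu.1), not_lt.2 hu.1]
  have h0 : (0 : ℝ) ∉ uIcc h t := by
    rw [uIcc_of_le ht]; exact fun h0 ↦ (hh.trans_le h0.1).ne rfl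
  rw [Omega₂Int, ← intervalIntegral.integral_add_adjacent_intervals
      (intervalIntegrable_const.congr_uIoo h_head)
      (((intervalIntegral.intervalIntegrable_rpow (Or.inr h0)).div_const _).congr
        (h_tail.mono uIoc_subset_uIcc)),
    ← Omega₂Int, Omega₂Int_of_le hh.le le_rfl, ← intervalIntegral.integral_congr h_tail,
    intervalIntegral.integral_div, integral_rpow (Or.inr ⟨by contrapose! hk1; linarith, h0⟩),
    Gamma_two_sub hk1, show -k + 1 = 1 - k by ring, show 1 - k = 1 + -k by ring, rpow_add hh,
    Real.rpow_one]
  field_simp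
  ring

theorem R2k_sub_Omega₂Int_of_le (ht : 0 < t) (hth : t ≤ h) :
    R2k k t - Omega₂Int k h t = (t ^ (1 - k) - t * h ^ (-k)) / Gamma (2 - k) := by
  rw [R2k, if_pos ht, Omega₂Int_of_le ht.le hth]
  ring

theorem R2k_sub_Omega₂Int_of_ge (hk1 : k ≠ 1) (hh : 0 < h) (ht : h ≤ t) :
    R2k k t - Omega₂Int k h t = 0 := by
  rw [R2k, if_pos (hh.trans_le ht), Omega₂Int_of_ge hk1 hh ht, sub_self]

theorem integral_R2k_sub_Omega₂Int_mul (hk1 : k ≠ 1) (hh : 0 < h) (φ : ℝ → ℝ) :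
    ∫ t in Ioi 0, (R2k k t - Omega₂Int k h t) * φ t
      = (∫ t in Ioc 0 h, (t ^ (1 - k) - t * h ^ (-k)) * φ t) / Gamma (2 - k) := by
  have h_tail : ∀ t ∈ Ioi 0 \ Ioc 0 h, (R2k k t - Omega₂Int k h t) * φ t = 0 := fun t ht ↦ by
    rw [R2k_sub_Omega₂Int_of_ge hk1 hh (not_le.1 fun hth ↦ ht.2 ⟨ht.1, hth⟩).le, zero_mul]
  rw [setIntegral_eq_of_subset_of_forall_sdiff_eq_zero measurableSet_Ioi Ioc_subset_Ioi_self
    h_tail, ← integral_div]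
  refine setIntegral_congr_fun measurableSet_Ioc fun t ht ↦ ?_
  rw [R2k_sub_Omega₂Int_of_le ht.1 ht.2]
  ring

theorem stieltjesOmega₂_eq (hk0 : 0 < k) (hk1 : k < 1) (hh : 0 < h) {f : ℝ → ℝ}
    (hf : IntegrableOn (fun x ↦ (f x - f 0) * x ^ (-1 - k)) (Ioi h)) :
    stieltjesOmega₂ k h f = k * h ^ (-k) * (f 0 - f h) / Gamma (2 - k)
      - k / Gamma (1 - k) * ∫ x in Ioi h, (f x - f 0) * x ^ (-1 - k) := by
  have hpow : IntegrableOn (fun x ↦ x ^ (-1 - k)) (Ioi h) :=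
    integrableOn_Ioi_rpow_of_lt (by linarith) hh
  have hsplit : ∫ x in Ioi h, f x * x ^ (-1 - k)
      = ∫ x in Ioi h, ((f x - f 0) * x ^ (-1 - k) + f 0 * x ^ (-1 - k)) :=
    integral_congr_ae (.of_forall fun x ↦ by ring)
  rw [stieltjesOmega₂, hsplit, integral_add hf (hpow.const_mul _), integral_const_mul,
    integral_Ioi_rpow_of_lt (by linarith) hh, show -1 - k + 1 = -k by ring,
    Gamma_two_sub hk1.ne]
  have := (Gamma_pos_of_pos (sub_pos.2 hk1)).ne'
  have := (sub_pos.2 hk1).ne'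
  generalize ∫ x in Ioi h, (f x - f 0) * x ^ (-1 - k) = I
  field_simp
  ring

theorem integral_Ioc_rpow_sub_mul_eq (hk1 : k < 1) (hh : 0 < h) {g g' g'' : ℝ → ℝ}
    (hg0 : g 0 = 0) (hg : ∀ t ∈ Icc 0 h, HasDerivAt g (g' t) t)
    (hg' : ∀ t ∈ Icc 0 h, HasDerivAt g' (g'' t) t)
    (hE : IntegrableOn (fun t ↦ (t ^ (1 - k) - t * h ^ (-k)) * g'' t) (Ioc 0 h))
    (hI : IntegrableOn (fun t ↦ g t * t ^ (-1 - k)) (Ioc 0 h)) :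
    ∫ t in Ioc 0 h, (t ^ (1 - k) - t * h ^ (-k)) * g'' t
      = k * h ^ (-k) * g h - k * (1 - k) * ∫ t in Ioc 0 h, g t * t ^ (-1 - k) := by
  set A : ℝ → ℝ := fun t ↦ t ^ (1 - k) * g' t - h ^ (-k) * (t * g' t - g t) with hA
  set Ψ : ℝ → ℝ := fun t ↦ A t - (1 - k) * (t ^ (-k) * g t) with hΨ
  have hderiv : ∀ t ∈ Ioo 0 h, HasDerivAt Ψ
      ((t ^ (1 - k) - t * h ^ (-k)) * g'' t + k * (1 - k) * (g t * t ^ (-1 - k))) t := by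
    intro t ht
    have hgt := hg t (Ioo_subset_Icc_self ht)
    have hg't := hg' t (Ioo_subset_Icc_self ht)
    have h1 := (hasDerivAt_rpow_const (p := 1 - k) (Or.inl ht.1.ne')).mul hg't
    have h2 := (((hasDerivAt_id t).mul hg't).sub hgt).const_mul (h ^ (-k))
    have h3 := ((hasDerivAt_rpow_const (p := -k) (Or.inl ht.1.ne')).mul hgt).const_mul (1 - k)
    refine ((h1.sub h2).sub h3).congr_deriv ?_
    rw [show 1 - k - 1 = -k by ring, show -k - 1 = -1 - k by ring, id]
    ring
  have h_zero : Tendsto Ψ (𝓝[>] 0) (𝓝 0) := by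
    have hA0 : ContinuousAt A 0 := by
      have := (hg 0 (left_mem_Icc.2 hh.le)).continuousAt
      have := (hg' 0 (left_mem_Icc.2 hh.le)).continuousAt
      fun_prop (disch := exact Or.inr (sub_pos.2 hk1).le)
    have hB0 := tendsto_rpow_neg_mul_nhdsGT_zero hk1 hg0 (hg 0 (left_mem_Icc.2 hh.le))
    convert (hA0.tendsto.mono_left nhdsWithin_le_nhds).sub (hB0.const_mul (1 - k))
    simp [hA, zero_rpow (sub_pos.2 hk1).ne', hg0]
  have h_end : Tendsto Ψ (𝓝[<] h) (𝓝 (k * h ^ (-k) * g h)) := by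
    have hΨh : ContinuousAt Ψ h := by
      have := (hg h (right_mem_Icc.2 hh.le)).continuousAt
      have := (hg' h (right_mem_Icc.2 hh.le)).continuousAt
      fun_prop (disch := exact Or.inl hh.ne')
    convert hΨh.tendsto.mono_left nhdsWithin_le_nhds using 2
    have hh1k : h ^ (1 - k) = h * h ^ (-k) := by
      rw [show 1 - k = 1 + -k by ring, rpow_add hh, Real.rpow_one]
    simp only [hΨ, hA, hh1k]
    ring
  have hFTC := intervalIntegral.integral_eq_sub_of_hasDerivAt_of_tendsto hh hderiv
    ((intervalIntegrable_iff_integrableOn_Ioc_of_le hh.le).2 (hE.add (hI.const_mul _)))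
    h_zero h_end
  rw [intervalIntegral.integral_of_le hh.le, integral_add hE (hI.const_mul _),
    integral_const_mul, sub_zero] at hFTC
  linarith

end

theorem relation_halfline_r2_general
    (k : ℝ) (hk0 : 0 < k) (hk1 : k < 1) (h : ℝ) (hh : 0 < h)
    (f f' f'' : ℝ → ℝ)
    (hfb : ∃ C, ∀ x ≥ (0:ℝ), |f x| ≤ C)
    (hd1 : ∀ x ≥ (0:ℝ), HasDerivAt f (f' x) x)
    (hd2 : ∀ x ≥ (0:ℝ), HasDerivAt f' (f'' x) x)
    (hf2b : ∃ C, ∀ x ≥ (0:ℝ), |f'' x| ≤ C) :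
    marchaud k 2 f 0 - stieltjesOmega₂ k h f
      = ∫ t in Set.Ioi (0:ℝ), (R2k k t - Omega₂Int k h t) * f'' t := by
  obtain ⟨C, hC⟩ := hfb
  obtain ⟨C₂, hC₂⟩ := hf2b
  have hI := integrableOn_Ioi_sub_mul_rpow hk0 hk1 hd1
    (fun t ht ↦ (hd2 t ht.1).continuousAt.continuousWithinAt) hC
  have hE : IntegrableOn (fun t ↦ (t ^ (1 - k) - t * h ^ (-k)) * f'' t) (Ioc 0 h) :=
    (integrableOn_Icc_mul_of_hasDerivAt_of_abs_le (by fun_prop (disch := simp [hk1.le]))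
      (fun t ht ↦ hd2 t ht.1) fun t ht ↦ hC₂ t ht.1).mono_set Ioc_subset_Icc_self
  rw [marchaud_two_zero hk0 hk1 hI,
    stieltjesOmega₂_eq hk0 hk1 hh (hI.mono_set (Ioi_subset_Ioi hh.le)),
    integral_R2k_sub_Omega₂Int_mul hk1.ne hh,
    integral_Ioc_rpow_sub_mul_eq hk1 hh (sub_self (f 0)) (fun t ht ↦ (hd1 t ht.1).sub_const _)
      (fun t ht ↦ hd2 t ht.1) hE (hI.mono_set Ioc_subset_Ioi_self),
    integral_Ioi_eq_integral_Ioc_add_integral_Ioi hh.le hI, Gamma_two_sub hk1.ne]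
  generalize ∫ t in Ioc 0 h, (f t - f 0) * t ^ (-1 - k) = I₁
  generalize ∫ t in Ioi h, (f t - f 0) * t ^ (-1 - k) = I₂
  have := (Real.Gamma_pos_of_pos (sub_pos.2 hk1)).ne'
  have := (sub_pos.2 hk1).ne'
  field_simp
  ring

/-- For `k ∈ (0,1)`, `h > 0` and every bounded `f : ℝ₊ → ℝ` with `f'` locally absolutely
continuous and `f''` bounded:
`D^k_- f(0) − ∫_0^∞ f dΩ = ∫_0^∞ (R_{2-k}(t) − Ω^{[1]}(t)) f''(t) dt`. -/
theorem relation_halfline_r2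
    (k : ℝ) (hk0 : 0 < k) (hk1 : k < 1) (h : ℝ) (hh : 0 < h)
    (f f' f'' : ℝ → ℝ) (hm : Measurable f'')
    (hfb : ∃ C, ∀ x ≥ (0:ℝ), |f x| ≤ C)
    (hd1 : ∀ x ≥ (0:ℝ), HasDerivAt f (f' x) x)
    (hd2 : ∀ x ≥ (0:ℝ), HasDerivAt f' (f'' x) x)
    (hf2b : ∃ C, ∀ x ≥ (0:ℝ), |f'' x| ≤ C) :
    marchaud k 2 f 0 - stieltjesOmega₂ k h f
      = ∫ t in Set.Ioi (0:ℝ), (R2k k t - Omega₂Int k h t) * f'' t :=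
  relation_halfline_r2_general k hk0 hk1 h hh f f' f'' hfb hd1 hd2 hf2b
end

section
/- Let G = ℝ or ℝ₊, let A be a homogeneous operator from a normed space X to a normed space Y with domain D_A, and let Q ⊆ D_A be a centrally symmetric convex set. Suppose there exist x₀ ∈ Q and a bounded linear operator S₀: X → Y with ‖A x₀‖_Y = U(A, S₀; Q) + ‖S₀‖·‖x₀‖_X, where U(A,S;Q) := sup_{x ∈ Q} ‖Ax − Sx‖_Y. Then Ω(‖x₀‖_X, A; Q) = ‖A x₀‖_Y and E_{‖S₀‖}(A; Q) = U(A, S₀; Q) = ‖A x₀‖_Y − ‖S₀‖·‖x₀‖_X, where Ω(δ, A; Q) := sup{‖Af‖_Y : f ∈ Q, ‖f‖_X ≤ δ} and E_N(A;Q) := inf{U(A,S;Q) : S linear bounded, ‖S‖ ≤ N}. -/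
open ENNReal

/-- The error `U(A,S;Q) = sup_{x ∈ Q} ‖Ax − Sx‖` (valued in `ℝ≥0∞`). -/
noncomputable def Uerr {X Y : Type*} [NormedAddCommGroup X] [NormedSpace ℝ X]
    [NormedAddCommGroup Y] [NormedSpace ℝ Y]
    (A : X → Y) (S : X →L[ℝ] Y) (Q : Set X) : ℝ≥0∞ :=
  ⨆ x ∈ Q, (‖A x - S x‖₊ : ℝ≥0∞)

/-- The modulus of continuity `Ω(δ,A;Q) = sup {‖Af‖ : f ∈ Q, ‖f‖ ≤ δ}`. -/
noncomputable def modCont {X Y : Type*} [NormedAddCommGroup X] [NormedSpace ℝ X]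
    [NormedAddCommGroup Y] [NormedSpace ℝ Y]
    (A : X → Y) (Q : Set X) (δ : ℝ) : ℝ≥0∞ :=
  ⨆ f ∈ {f | f ∈ Q ∧ ‖f‖ ≤ δ}, (‖A f‖₊ : ℝ≥0∞)

/-- The best approximation `E_N(A;Q) = inf {U(A,S;Q) : S linear bounded, ‖S‖ ≤ N}`. -/
noncomputable def bestApprox {X Y : Type*} [NormedAddCommGroup X] [NormedSpace ℝ X]
    [NormedAddCommGroup Y] [NormedSpace ℝ Y]
    (A : X → Y) (Q : Set X) (N : ℝ) : ℝ≥0∞ :=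
  ⨅ S ∈ {S : X →L[ℝ] Y | ‖S‖ ≤ N}, Uerr A S Q

/-!
Every `x ∈ Q` and every bounded `S` give `‖Ax‖ ≤ U(A,S;Q) + ‖S‖‖x‖`, by the triangle inequality
through `Sx`. Applied with `S = S₀` to all `f` with `‖f‖ ≤ ‖x₀‖` this bounds `Ω(‖x₀‖)` by
`U(A,S₀;Q) + ‖S₀‖‖x₀‖ = ‖Ax₀‖`; applied at `x = x₀` to every `S` with `‖S‖ ≤ ‖S₀‖` it bounds
`E_{‖S₀‖}` from below by `‖Ax₀‖ − ‖S₀‖‖x₀‖ = U(A,S₀;Q)`. So the extremality hypothesis forces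
both estimates to be equalities.
-/

section Stechkin

variable {X Y : Type*} [NormedAddCommGroup X] [NormedSpace ℝ X]
  [NormedAddCommGroup Y] [NormedSpace ℝ Y] {A : X → Y} {Q : Set X} {x : X}

theorem nnnorm_sub_le_Uerr (S : X →L[ℝ] Y) (hx : x ∈ Q) :
    (‖A x - S x‖₊ : ℝ≥0∞) ≤ Uerr A S Q :=
  le_iSup₂ (f := fun x (_ : x ∈ Q) => (‖A x - S x‖₊ : ℝ≥0∞)) x hx

theorem nnnorm_le_Uerr_add (S : X →L[ℝ] Y) (hx : x ∈ Q) :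
    (‖A x‖₊ : ℝ≥0∞) ≤ Uerr A S Q + ‖S‖₊ * ‖x‖₊ := by
  have htri : ‖A x‖₊ ≤ ‖A x - S x‖₊ + ‖S‖₊ * ‖x‖₊ :=
    calc ‖A x‖₊ = ‖(A x - S x) + S x‖₊ := by rw [sub_add_cancel]
      _ ≤ ‖A x - S x‖₊ + ‖S x‖₊ := nnnorm_add_le _ _
      _ ≤ ‖A x - S x‖₊ + ‖S‖₊ * ‖x‖₊ := by gcongr; exact S.le_opNNNorm x
  calc (‖A x‖₊ : ℝ≥0∞) ≤ ‖A x - S x‖₊ + ‖S‖₊ * ‖x‖₊ := by exact_mod_cast htri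
    _ ≤ Uerr A S Q + ‖S‖₊ * ‖x‖₊ := by gcongr; exact nnnorm_sub_le_Uerr S hx

theorem nnnorm_le_modCont (hx : x ∈ Q) : (‖A x‖₊ : ℝ≥0∞) ≤ modCont A Q ‖x‖ :=
  le_iSup₂ (f := fun f (_ : f ∈ {f | f ∈ Q ∧ ‖f‖ ≤ ‖x‖}) => (‖A f‖₊ : ℝ≥0∞)) x ⟨hx, le_rfl⟩

theorem modCont_le_Uerr_add (S : X →L[ℝ] Y) (δ : NNReal) :
    modCont A Q δ ≤ Uerr A S Q + ‖S‖₊ * δ := by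
  refine iSup₂_le fun f ⟨hfQ, hfδ⟩ => (nnnorm_le_Uerr_add S hfQ).trans ?_
  gcongr
  exact_mod_cast hfδ

theorem bestApprox_le_Uerr {N : ℝ} {S : X →L[ℝ] Y} (hS : ‖S‖ ≤ N) :
    bestApprox A Q N ≤ Uerr A S Q :=
  iInf₂_le S hS

theorem nnnorm_sub_mul_le_bestApprox (N : NNReal) (hx : x ∈ Q) :
    (‖A x‖₊ : ℝ≥0∞) - N * ‖x‖₊ ≤ bestApprox A Q N := by
  refine le_iInf₂ fun S (hS : ‖S‖ ≤ N) => tsub_le_iff_right.mpr ?_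
  calc (‖A x‖₊ : ℝ≥0∞) ≤ Uerr A S Q + ‖S‖₊ * ‖x‖₊ := nnnorm_le_Uerr_add S hx
    _ ≤ Uerr A S Q + N * ‖x‖₊ := by gcongr; exact_mod_cast hS

end Stechkin

theorem stechkin_theorem_general {X Y : Type*} [NormedAddCommGroup X] [NormedSpace ℝ X]
    [NormedAddCommGroup Y] [NormedSpace ℝ Y]
    (A : X → Y)
    (Q : Set X)
    (x₀ : X) (hx₀ : x₀ ∈ Q) (S₀ : X →L[ℝ] Y)
    (hext : (‖A x₀‖₊ : ℝ≥0∞) = Uerr A S₀ Q + (‖S₀‖₊ : ℝ≥0∞) * (‖x₀‖₊ : ℝ≥0∞)) :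
    modCont A Q ‖x₀‖ = (‖A x₀‖₊ : ℝ≥0∞) ∧
    bestApprox A Q ‖S₀‖ = Uerr A S₀ Q ∧
    Uerr A S₀ Q = (‖A x₀‖₊ : ℝ≥0∞) - (‖S₀‖₊ : ℝ≥0∞) * (‖x₀‖₊ : ℝ≥0∞) := by
  have hUerr : Uerr A S₀ Q = (‖A x₀‖₊ : ℝ≥0∞) - (‖S₀‖₊ : ℝ≥0∞) * (‖x₀‖₊ : ℝ≥0∞) := by
    rw [hext, ENNReal.add_sub_cancel_right (by finiteness)]
  refine ⟨?_, ?_, hUerr⟩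
  · refine le_antisymm ?_ (nnnorm_le_modCont hx₀)
    exact hext ▸ modCont_le_Uerr_add S₀ ‖x₀‖₊
  · refine le_antisymm (bestApprox_le_Uerr le_rfl) ?_
    exact hUerr ▸ nnnorm_sub_mul_le_bestApprox ‖S₀‖₊ hx₀

/-- Stechkin's theorem: if `A` is homogeneous on its domain `D`, `Q ⊆ D` is centrally
symmetric and convex, and `x₀ ∈ Q`, `S₀` bounded linear satisfy
`‖A x₀‖ = U(A,S₀;Q) + ‖S₀‖·‖x₀‖`, then `Ω(‖x₀‖,A;Q) = ‖A x₀‖` and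
`E_{‖S₀‖}(A;Q) = U(A,S₀;Q) = ‖A x₀‖ − ‖S₀‖·‖x₀‖`. -/
theorem stechkin_theorem {X Y : Type*} [NormedAddCommGroup X] [NormedSpace ℝ X]
    [NormedAddCommGroup Y] [NormedSpace ℝ Y]
    (A : X → Y) (D : Set X)
    (hhom : ∀ (c : ℝ), ∀ x ∈ D, c • x ∈ D ∧ A (c • x) = c • A x)
    (Q : Set X) (hQD : Q ⊆ D) (hsym : ∀ x ∈ Q, -x ∈ Q) (hconv : Convex ℝ Q)
    (x₀ : X) (hx₀ : x₀ ∈ Q) (S₀ : X →L[ℝ] Y)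
    (hext : (‖A x₀‖₊ : ℝ≥0∞) = Uerr A S₀ Q + (‖S₀‖₊ : ℝ≥0∞) * (‖x₀‖₊ : ℝ≥0∞)) :
    modCont A Q ‖x₀‖ = (‖A x₀‖₊ : ℝ≥0∞) ∧
    bestApprox A Q ‖S₀‖ = Uerr A S₀ Q ∧
    Uerr A S₀ Q = (‖A x₀‖₊ : ℝ≥0∞) - (‖S₀‖₊ : ℝ≥0∞) * (‖x₀‖₊ : ℝ≥0∞) :=
  stechkin_theorem_general A Q x₀ hx₀ S₀ hext
end
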